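/- For a Leibniz algebra g, the following are equivalent: (1) for every two-sided ideal J of g, the quotient g/J satisfies the minimal condition on solvable ideals; (2) for every two-sided ideal J of g, the quotient g/J satisfies the minimal condition on abelian ideals. -/
import Mathlib


universe u v

/-- A (left) Leibniz algebra over a field `K`: a `K`-vector space with a bilinear
bracket satisfying the left Leibniz identity. -/
class LeibnizAlgebra (K : Type u) (g : Type v) [Field K] [AddCommGroup g] [Module K g]
    extends Bracket g g where
  add_bracket : ∀ x y z : g, ⁅x + y, z⁆ = ⁅x, z⁆ + ⁅y, z⁆
  bracket_add : ∀ x y z : g, ⁅x, y + z⁆ = ⁅x, y⁆ + ⁅x, z⁆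
  smul_bracket : ∀ (c : K) (x y : g), ⁅c • x, y⁆ = c • ⁅x, y⁆
  bracket_smul : ∀ (c : K) (x y : g), ⁅x, c • y⁆ = c • ⁅x, y⁆
  leibniz : ∀ x y z : g, ⁅x, ⁅y, z⁆⁆ = ⁅⁅x, y⁆, z⁆ + ⁅y, ⁅x, z⁆⁆

namespace Leibniz

section Defs

variable (K : Type u) (g : Type v) [Field K] [AddCommGroup g] [Module K g] [LeibnizAlgebra K g]

lemma zero_bracket (y : g) : ⁅(0 : g), y⁆ = 0 := by
  have h := LeibnizAlgebra.smul_bracket (0 : K) (0 : g) y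
  simpa using h

lemma bracket_zero (y : g) : ⁅y, (0 : g)⁆ = 0 := by
  have h := LeibnizAlgebra.bracket_smul (0 : K) y (0 : g)
  simpa using h

lemma neg_bracket (x y : g) : ⁅-x, y⁆ = -⁅x, y⁆ := by
  have h := LeibnizAlgebra.smul_bracket (-1 : K) x y
  simpa using h

lemma bracket_neg (x y : g) : ⁅x, -y⁆ = -⁅x, y⁆ := by
  have h := LeibnizAlgebra.bracket_smul (-1 : K) x y
  simpa using h

lemma sub_bracket (x x' y : g) : ⁅x - x', y⁆ = ⁅x, y⁆ - ⁅x', y⁆ := by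
  rw [sub_eq_add_neg, LeibnizAlgebra.add_bracket, neg_bracket K, ← sub_eq_add_neg]

lemma bracket_sub (x y y' : g) : ⁅x, y - y'⁆ = ⁅x, y⁆ - ⁅x, y'⁆ := by
  rw [sub_eq_add_neg, LeibnizAlgebra.bracket_add, bracket_neg K, ← sub_eq_add_neg]

/-- A (two-sided) ideal of a Leibniz algebra: a subspace `I` with `⁅g,I⁆ ⊆ I` and
`⁅I,g⁆ ⊆ I`. -/
def IsIdeal (I : Submodule K g) : Prop :=
  ∀ x : g, ∀ a ∈ I, ⁅x, a⁆ ∈ I ∧ ⁅a, x⁆ ∈ I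

/-- The bracket `[A, B]` of two subspaces: the span of all brackets `⁅a, b⁆`. -/
def bk (A B : Submodule K g) : Submodule K g :=
  Submodule.span K {z : g | ∃ a ∈ A, ∃ b ∈ B, z = ⁅a, b⁆}

/-- The derived series of a subspace `I`, computed in `g`:
`I^(0) = I`, `I^(n+1) = [I^(n), I^(n)]`. -/
def subDerived (I : Submodule K g) : ℕ → Submodule K g
  | 0 => I
  | n + 1 => bk K g (subDerived I n) (subDerived I n)

/-- The derived series of `g`: `g^(0) = g`, `g^(n+1) = [g^(n), g^(n)]`. -/
def derived : ℕ → Submodule K g := subDerived K g ⊤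

/-- A Leibniz algebra is solvable if `g^(n) = 0` for some `n`. -/
def IsSolvable : Prop := ∃ n : ℕ, derived K g n = ⊥

/-- A Leibniz algebra is abelian if its bracket is identically zero. -/
def IsAbelian : Prop := ∀ x y : g, ⁅x, y⁆ = 0

/-- A nonzero Leibniz algebra is simple if its only two-sided ideals are `⊥` and `⊤`. -/
def IsSimpleAlg : Prop :=
  (∃ x : g, x ≠ 0) ∧ ∀ I : Submodule K g, IsIdeal K g I → I = ⊥ ∨ I = ⊤

/-- A Leibniz algebra `g` is quasi-Artinian if for every descending chain of ideals
`I_1 ⊇ I_2 ⊇ ⋯` there is `m` with `[g^(m), I_m] ⊆ I_n` and `[I_m, g^(m)] ⊆ I_n` for all `n`. -/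
def QuasiArtinian : Prop :=
  ∀ I : ℕ → Submodule K g, (∀ n, IsIdeal K g (I n)) → (∀ n, I (n + 1) ≤ I n) →
    ∃ m : ℕ, ∀ n : ℕ,
      bk K g (derived K g m) (I m) ≤ I n ∧ bk K g (I m) (derived K g m) ≤ I n

/-- A Leibniz algebra is Artinian if every descending chain of two-sided ideals stabilizes. -/
def ArtinianAlg : Prop :=
  ∀ I : ℕ → Submodule K g, (∀ n, IsIdeal K g (I n)) → (∀ n, I (n + 1) ≤ I n) →
    ∃ m : ℕ, ∀ n : ℕ, m ≤ n → I n = I m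

/-- A solvable ideal: an ideal which is solvable (as a Leibniz algebra). -/
def IsSolvableIdeal (I : Submodule K g) : Prop :=
  IsIdeal K g I ∧ ∃ n : ℕ, subDerived K g I n = ⊥

/-- An abelian ideal: an ideal whose bracket vanishes identically. -/
def IsAbelianIdeal (I : Submodule K g) : Prop :=
  IsIdeal K g I ∧ ∀ x ∈ I, ∀ y ∈ I, ⁅x, y⁆ = (0 : g)

/-- Minimal condition on solvable ideals: every descending chain of solvable
two-sided ideals stabilizes. -/
def MinOnSolvableIdeals : Prop :=
  ∀ I : ℕ → Submodule K g, (∀ n, IsSolvableIdeal K g (I n)) → (∀ n, I (n + 1) ≤ I n) →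
    ∃ m : ℕ, ∀ n : ℕ, m ≤ n → I n = I m

/-- Minimal condition on abelian ideals: every descending chain of abelian
two-sided ideals stabilizes. -/
def MinOnAbelianIdeals : Prop :=
  ∀ I : ℕ → Submodule K g, (∀ n, IsAbelianIdeal K g (I n)) → (∀ n, I (n + 1) ≤ I n) →
    ∃ m : ℕ, ∀ n : ℕ, m ≤ n → I n = I m

/-- `I` is a two-sided ideal of the subalgebra `A` (both viewed as subspaces of `g`). -/
def IsIdealIn (A I : Submodule K g) : Prop :=
  I ≤ A ∧ ∀ x ∈ A, ∀ a ∈ I, ⁅x, a⁆ ∈ I ∧ ⁅a, x⁆ ∈ I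

/-- A prime ideal: a proper two-sided ideal `P` such that `[h₁, h₂] ⊆ P` for ideals
`h₁, h₂` forces `h₁ ⊆ P` or `h₂ ⊆ P`. -/
def IsPrimeIdeal (P : Submodule K g) : Prop :=
  IsIdeal K g P ∧ P ≠ ⊤ ∧
    ∀ h₁ h₂ : Submodule K g, IsIdeal K g h₁ → IsIdeal K g h₂ →
      bk K g h₁ h₂ ≤ P → h₁ ≤ P ∨ h₂ ≤ P

/-- `Leib(g)`: the subspace spanned by all squares `⁅x, x⁆`. -/
def leibIdeal : Submodule K g :=
  Submodule.span K {z : g | ∃ x : g, z = ⁅x, x⁆}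

/-- Given a subspace `C`, the preimage of the center of `g/C`:
all `x` with `⁅x, y⁆ ∈ C` and `⁅y, x⁆ ∈ C` for every `y`. -/
def centerStep (C : Submodule K g) : Submodule K g where
  carrier := {x : g | ∀ y : g, ⁅x, y⁆ ∈ C ∧ ⁅y, x⁆ ∈ C}
  add_mem' := by
    intro a b ha hb
    intro y
    constructor
    · rw [LeibnizAlgebra.add_bracket]; exact C.add_mem (ha y).1 (hb y).1
    · rw [LeibnizAlgebra.bracket_add]; exact C.add_mem (ha y).2 (hb y).2
  zero_mem' := by
    intro y
    constructor
    · rw [zero_bracket K]; exact C.zero_mem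
    · rw [bracket_zero K]; exact C.zero_mem
  smul_mem' := by
    intro c a ha y
    constructor
    · rw [LeibnizAlgebra.smul_bracket]; exact C.smul_mem c (ha y).1
    · rw [LeibnizAlgebra.bracket_smul]; exact C.smul_mem c (ha y).2

/-- The transfinite upper central series of `g`: `ζ_0 = 0`,
`ζ_{α+1}/ζ_α = Z(g/ζ_α)`, and `ζ_ρ = ⋃_{α<ρ} ζ_α` at limit ordinals. -/
noncomputable def zeta : Ordinal.{0} → Submodule K g := fun o =>
  Ordinal.limitRecOn o ⊥ (fun _ C => centerStep K g C)
    (fun o _ ih => ⨆ (a : Ordinal.{0}) (h : a < o), ih a h)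

/-- `g` is hypercentral if `ζ_α(g) = g` for some ordinal `α`. -/
def Hypercentral : Prop := ∃ o : Ordinal.{0}, zeta K g o = ⊤

end Defs

section Quotient

variable {K : Type u} {g : Type v} [Field K] [AddCommGroup g] [Module K g] [LeibnizAlgebra K g]

/-- The bracket induced on the quotient `g ⧸ I` by a two-sided ideal `I`. -/
def quotBracket (I : Submodule K g) (hI : IsIdeal K g I) : g ⧸ I → g ⧸ I → g ⧸ I :=
  Quotient.map₂ (fun x y : g => ⁅x, y⁆) (by
    intro x x' hx y y' hy
    have hx' : x - x' ∈ I := (Submodule.quotientRel_def I).1 hx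
    have hy' : y - y' ∈ I := (Submodule.quotientRel_def I).1 hy
    refine (Submodule.quotientRel_def I).2 ?_
    have key : ⁅x, y⁆ - ⁅x', y'⁆ = ⁅x - x', y⁆ + ⁅x', y - y'⁆ := by
      rw [sub_bracket K, bracket_sub K]
      abel
    rw [key]
    exact I.add_mem (hI y (x - x') hx').2 (hI x' (y - y') hy').1)

@[simp] lemma quotBracket_mk (I : Submodule K g) (hI : IsIdeal K g I) (x y : g) :
    quotBracket I hI (Submodule.Quotient.mk x) (Submodule.Quotient.mk y) =
      Submodule.Quotient.mk ⁅x, y⁆ := rfl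

/-- The quotient Leibniz algebra `g ⧸ I` of `g` by a two-sided ideal `I`. -/
def quotLeibniz (I : Submodule K g) (hI : IsIdeal K g I) : LeibnizAlgebra K (g ⧸ I) where
  bracket := quotBracket I hI
  add_bracket X Y Z := by
    obtain ⟨x, rfl⟩ := Submodule.Quotient.mk_surjective I X
    obtain ⟨y, rfl⟩ := Submodule.Quotient.mk_surjective I Y
    obtain ⟨z, rfl⟩ := Submodule.Quotient.mk_surjective I Z
    show quotBracket I hI (Submodule.Quotient.mk x + Submodule.Quotient.mk y)
        (Submodule.Quotient.mk z) = _
    rw [← Submodule.Quotient.mk_add, quotBracket_mk]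
    show _ = quotBracket I hI (Submodule.Quotient.mk x) (Submodule.Quotient.mk z) +
      quotBracket I hI (Submodule.Quotient.mk y) (Submodule.Quotient.mk z)
    rw [quotBracket_mk, quotBracket_mk, ← Submodule.Quotient.mk_add,
      LeibnizAlgebra.add_bracket]
  bracket_add X Y Z := by
    obtain ⟨x, rfl⟩ := Submodule.Quotient.mk_surjective I X
    obtain ⟨y, rfl⟩ := Submodule.Quotient.mk_surjective I Y
    obtain ⟨z, rfl⟩ := Submodule.Quotient.mk_surjective I Z
    show quotBracket I hI (Submodule.Quotient.mk x)
        (Submodule.Quotient.mk y + Submodule.Quotient.mk z) = _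
    rw [← Submodule.Quotient.mk_add, quotBracket_mk]
    show _ = quotBracket I hI (Submodule.Quotient.mk x) (Submodule.Quotient.mk y) +
      quotBracket I hI (Submodule.Quotient.mk x) (Submodule.Quotient.mk z)
    rw [quotBracket_mk, quotBracket_mk, ← Submodule.Quotient.mk_add,
      LeibnizAlgebra.bracket_add]
  smul_bracket c X Y := by
    obtain ⟨x, rfl⟩ := Submodule.Quotient.mk_surjective I X
    obtain ⟨y, rfl⟩ := Submodule.Quotient.mk_surjective I Y
    show quotBracket I hI (c • Submodule.Quotient.mk x) (Submodule.Quotient.mk y) =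
      c • quotBracket I hI (Submodule.Quotient.mk x) (Submodule.Quotient.mk y)
    rw [← Submodule.Quotient.mk_smul, quotBracket_mk, quotBracket_mk,
      ← Submodule.Quotient.mk_smul, LeibnizAlgebra.smul_bracket]
  bracket_smul c X Y := by
    obtain ⟨x, rfl⟩ := Submodule.Quotient.mk_surjective I X
    obtain ⟨y, rfl⟩ := Submodule.Quotient.mk_surjective I Y
    show quotBracket I hI (Submodule.Quotient.mk x) (c • Submodule.Quotient.mk y) =
      c • quotBracket I hI (Submodule.Quotient.mk x) (Submodule.Quotient.mk y)
    rw [← Submodule.Quotient.mk_smul, quotBracket_mk, quotBracket_mk,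
      ← Submodule.Quotient.mk_smul, LeibnizAlgebra.bracket_smul]
  leibniz X Y Z := by
    obtain ⟨x, rfl⟩ := Submodule.Quotient.mk_surjective I X
    obtain ⟨y, rfl⟩ := Submodule.Quotient.mk_surjective I Y
    obtain ⟨z, rfl⟩ := Submodule.Quotient.mk_surjective I Z
    show quotBracket I hI (Submodule.Quotient.mk x)
        (quotBracket I hI (Submodule.Quotient.mk y) (Submodule.Quotient.mk z)) = _
    rw [quotBracket_mk, quotBracket_mk]
    show _ = quotBracket I hI
        (quotBracket I hI (Submodule.Quotient.mk x) (Submodule.Quotient.mk y))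
        (Submodule.Quotient.mk z) +
      quotBracket I hI (Submodule.Quotient.mk y)
        (quotBracket I hI (Submodule.Quotient.mk x) (Submodule.Quotient.mk z))
    rw [quotBracket_mk, quotBracket_mk, quotBracket_mk, quotBracket_mk,
      ← Submodule.Quotient.mk_add, LeibnizAlgebra.leibniz]

/-- A two-sided ideal of a Leibniz algebra, regarded as a Leibniz algebra itself. -/
def idealLeibniz (I : Submodule K g) (hI : IsIdeal K g I) : LeibnizAlgebra K I where
  bracket a b := ⟨⁅(a : g), (b : g)⁆, (hI (a : g) (b : g) b.2).1⟩
  add_bracket a b c := Subtype.ext (by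
    show ⁅((a + b : I) : g), (c : g)⁆ = ⁅(a : g), (c : g)⁆ + ⁅(b : g), (c : g)⁆
    rw [Submodule.coe_add, LeibnizAlgebra.add_bracket])
  bracket_add a b c := Subtype.ext (by
    show ⁅(a : g), ((b + c : I) : g)⁆ = ⁅(a : g), (b : g)⁆ + ⁅(a : g), (c : g)⁆
    rw [Submodule.coe_add, LeibnizAlgebra.bracket_add])
  smul_bracket c a b := Subtype.ext (by
    show ⁅((c • a : I) : g), (b : g)⁆ = c • ⁅(a : g), (b : g)⁆
    rw [Submodule.coe_smul, LeibnizAlgebra.smul_bracket])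
  bracket_smul c a b := Subtype.ext (by
    show ⁅(a : g), ((c • b : I) : g)⁆ = c • ⁅(a : g), (b : g)⁆
    rw [Submodule.coe_smul, LeibnizAlgebra.bracket_smul])
  leibniz a b c := Subtype.ext (by
    show ⁅(a : g), ⁅(b : g), (c : g)⁆⁆ =
      ⁅⁅(a : g), (b : g)⁆, (c : g)⁆ + ⁅(b : g), ⁅(a : g), (c : g)⁆⁆
    exact LeibnizAlgebra.leibniz (a : g) (b : g) (c : g))

end Quotient

section Constructions

variable {K : Type u} [Field K]

/-- The direct sum of two Leibniz algebras, with componentwise bracket. -/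
instance prodLeibniz (g₁ : Type v) (g₂ : Type v) [AddCommGroup g₁] [Module K g₁]
    [LeibnizAlgebra K g₁] [AddCommGroup g₂] [Module K g₂] [LeibnizAlgebra K g₂] :
    LeibnizAlgebra K (g₁ × g₂) where
  bracket x y := (⁅x.1, y.1⁆, ⁅x.2, y.2⁆)
  add_bracket x y z := Prod.ext_iff.2
    ⟨LeibnizAlgebra.add_bracket x.1 y.1 z.1, LeibnizAlgebra.add_bracket x.2 y.2 z.2⟩
  bracket_add x y z := Prod.ext_iff.2
    ⟨LeibnizAlgebra.bracket_add x.1 y.1 z.1, LeibnizAlgebra.bracket_add x.2 y.2 z.2⟩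
  smul_bracket c x y := Prod.ext_iff.2
    ⟨LeibnizAlgebra.smul_bracket c x.1 y.1, LeibnizAlgebra.smul_bracket c x.2 y.2⟩
  bracket_smul c x y := Prod.ext_iff.2
    ⟨LeibnizAlgebra.bracket_smul c x.1 y.1, LeibnizAlgebra.bracket_smul c x.2 y.2⟩
  leibniz x y z := Prod.ext_iff.2
    ⟨LeibnizAlgebra.leibniz x.1 y.1 z.1, LeibnizAlgebra.leibniz x.2 y.2 z.2⟩

/-- The direct sum of countably many copies of a Leibniz algebra `H`
(finitely supported sequences), with componentwise bracket. -/
noncomputable instance finsuppLeibniz (H : Type v) [AddCommGroup H] [Module K H]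
    [LeibnizAlgebra K H] : LeibnizAlgebra K (ℕ →₀ H) where
  bracket f h := Finsupp.zipWith (fun a b : H => ⁅a, b⁆) (zero_bracket K H 0) f h
  add_bracket f f' h := by
    ext i
    simp only [Finsupp.zipWith_apply, Finsupp.add_apply]
    exact LeibnizAlgebra.add_bracket (f i) (f' i) (h i)
  bracket_add f h h' := by
    ext i
    simp only [Finsupp.zipWith_apply, Finsupp.add_apply]
    exact LeibnizAlgebra.bracket_add (f i) (h i) (h' i)
  smul_bracket c f h := by
    ext i
    simp only [Finsupp.zipWith_apply, Finsupp.smul_apply]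
    exact LeibnizAlgebra.smul_bracket c (f i) (h i)
  bracket_smul c f h := by
    ext i
    simp only [Finsupp.zipWith_apply, Finsupp.smul_apply]
    exact LeibnizAlgebra.bracket_smul c (f i) (h i)
  leibniz f h k := by
    ext i
    simp only [Finsupp.zipWith_apply, Finsupp.add_apply]
    exact LeibnizAlgebra.leibniz (f i) (h i) (k i)

end Constructions

end Leibniz

open Leibniz


section AuxProof

variable {K : Type u} {g : Type v} [Field K] [AddCommGroup g] [Module K g] [LeibnizAlgebra K g]

lemma mem_bk' {A B : Submodule K g} {a b : g} (ha : a ∈ A) (hb : b ∈ B) :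
    ⁅a, b⁆ ∈ bk K g A B :=
  Submodule.subset_span ⟨a, ha, b, hb, rfl⟩

lemma bk_le' {A B C : Submodule K g}
    (h : ∀ a ∈ A, ∀ b ∈ B, ⁅a, b⁆ ∈ C) : bk K g A B ≤ C := by
  apply Submodule.span_le.2
  rintro z ⟨a, ha, b, hb, rfl⟩
  exact h a ha b hb

lemma bk_mono' {A A' B B' : Submodule K g} (h1 : A ≤ A') (h2 : B ≤ B') :
    bk K g A B ≤ bk K g A' B' :=
  bk_le' fun a ha b hb => mem_bk' (h1 ha) (h2 hb)

lemma bk_self_le {A : Submodule K g} (hA : IsIdeal K g A) : bk K g A A ≤ A :=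
  bk_le' fun a _ b hb => (hA a b hb).1

lemma sup_isIdeal' {A B : Submodule K g} (hA : IsIdeal K g A) (hB : IsIdeal K g B) :
    IsIdeal K g (A ⊔ B) := by
  intro x c hc
  rw [Submodule.mem_sup] at hc
  obtain ⟨a, ha, b, hb, rfl⟩ := hc
  constructor
  · rw [LeibnizAlgebra.bracket_add]
    exact Submodule.add_mem _ (Submodule.mem_sup_left (hA x a ha).1)
      (Submodule.mem_sup_right (hB x b hb).1)
  · rw [LeibnizAlgebra.add_bracket]
    exact Submodule.add_mem _ (Submodule.mem_sup_left (hA x a ha).2)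
      (Submodule.mem_sup_right (hB x b hb).2)

lemma bk_isIdeal' {A : Submodule K g} (hA : IsIdeal K g A) : IsIdeal K g (bk K g A A) := by
  intro x c hc
  induction hc using Submodule.span_induction with
  | mem z hz =>
    obtain ⟨a, ha, b, hb, rfl⟩ := hz
    constructor
    · rw [LeibnizAlgebra.leibniz]
      exact Submodule.add_mem _ (mem_bk' (hA x a ha).1 hb) (mem_bk' ha (hA x b hb).1)
    · have h := LeibnizAlgebra.leibniz (K := K) a b x
      have h2 : ⁅⁅a, b⁆, x⁆ = ⁅a, ⁅b, x⁆⁆ - ⁅b, ⁅a, x⁆⁆ := by rw [h]; abel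
      rw [h2]
      exact Submodule.sub_mem _ (mem_bk' ha (hA x b hb).2) (mem_bk' hb (hA x a ha).2)
  | zero =>
    exact ⟨by rw [bracket_zero K]; exact Submodule.zero_mem _,
      by rw [zero_bracket K]; exact Submodule.zero_mem _⟩
  | add y z hy hz ihy ihz =>
    exact ⟨by rw [LeibnizAlgebra.bracket_add]; exact Submodule.add_mem _ ihy.1 ihz.1,
      by rw [LeibnizAlgebra.add_bracket]; exact Submodule.add_mem _ ihy.2 ihz.2⟩
  | smul c y hy ihy =>
    exact ⟨by rw [LeibnizAlgebra.bracket_smul]; exact Submodule.smul_mem _ _ ihy.1,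
      by rw [LeibnizAlgebra.smul_bracket]; exact Submodule.smul_mem _ _ ihy.2⟩

lemma subDerived_mono' {A B : Submodule K g} (h : A ≤ B) (k : ℕ) :
    subDerived K g A k ≤ subDerived K g B k := by
  induction k with
  | zero => exact h
  | succ k ih => exact bk_mono' ih ih

lemma bk_sup_le' {A J : Submodule K g} (hJ : IsIdeal K g J) :
    bk K g (A ⊔ J) (A ⊔ J) ≤ bk K g A A ⊔ J := by
  apply bk_le'
  intro u hu v hv
  rw [Submodule.mem_sup] at hu hv
  obtain ⟨a, ha, j, hj, rfl⟩ := hu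
  obtain ⟨a', ha', j', hj', rfl⟩ := hv
  rw [LeibnizAlgebra.add_bracket, LeibnizAlgebra.bracket_add, LeibnizAlgebra.bracket_add]
  refine Submodule.add_mem _ (Submodule.add_mem _ ?_ ?_) (Submodule.add_mem _ ?_ ?_)
  · exact Submodule.mem_sup_left (mem_bk' ha ha')
  · exact Submodule.mem_sup_right (hJ a j' hj').1
  · exact Submodule.mem_sup_right (hJ a' j hj).2
  · exact Submodule.mem_sup_right (hJ j j' hj').1

lemma subDerived_sup_le' {J : Submodule K g} (hJ : IsIdeal K g J) (A : Submodule K g) (k : ℕ) :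
    subDerived K g (A ⊔ J) k ≤ subDerived K g A k ⊔ J := by
  induction k with
  | zero => exact le_rfl
  | succ k ih =>
    calc subDerived K g (A ⊔ J) (k + 1)
        = bk K g (subDerived K g (A ⊔ J) k) (subDerived K g (A ⊔ J) k) := rfl
      _ ≤ bk K g (subDerived K g A k ⊔ J) (subDerived K g A k ⊔ J) := bk_mono' ih ih
      _ ≤ bk K g (subDerived K g A k) (subDerived K g A k) ⊔ J := bk_sup_le' hJ
      _ = subDerived K g A (k + 1) ⊔ J := rfl

lemma subDerived_shift' (A : Submodule K g) (k : ℕ) :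
    subDerived K g A (k + 1) = subDerived K g (bk K g A A) k := by
  induction k with
  | zero => rfl
  | succ k ih =>
    show bk K g (subDerived K g A (k + 1)) (subDerived K g A (k + 1)) = _
    rw [ih]
    rfl

lemma chain_le' {α : Type*} [Preorder α] (Q : ℕ → α) (h : ∀ n, Q (n + 1) ≤ Q n)
    {m n : ℕ} (hmn : m ≤ n) : Q n ≤ Q m := by
  obtain ⟨k, rfl⟩ := Nat.exists_eq_add_of_le hmn
  clear hmn
  induction k with
  | zero => exact le_rfl
  | succ k ih => exact le_trans (h (m + k)) ih

end AuxProof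

section QuotTransfer

variable {K : Type u} {g : Type v} [Field K] [AddCommGroup g] [Module K g] [LeibnizAlgebra K g]
variable (J : Submodule K g) (hJ : IsIdeal K g J)

lemma map_bk' (A B : Submodule K g) :
    Submodule.map J.mkQ (bk K g A B) =
      @bk K (g ⧸ J) _ _ _ (quotLeibniz J hJ) (Submodule.map J.mkQ A) (Submodule.map J.mkQ B) := by
  letI := quotLeibniz J hJ
  rw [bk, bk, Submodule.map_span]
  congr 1
  ext z
  constructor
  · rintro ⟨w, ⟨a, ha, b, hb, rfl⟩, rfl⟩
    exact ⟨J.mkQ a, ⟨a, ha, rfl⟩, J.mkQ b, ⟨b, hb, rfl⟩, rfl⟩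
  · rintro ⟨ab, ⟨a, ha, rfl⟩, bb, ⟨b, hb, rfl⟩, rfl⟩
    exact ⟨⁅a, b⁆, ⟨a, ha, b, hb, rfl⟩, rfl⟩

lemma map_subDerived' (A : Submodule K g) (k : ℕ) :
    Submodule.map J.mkQ (subDerived K g A k) =
      @subDerived K (g ⧸ J) _ _ _ (quotLeibniz J hJ) (Submodule.map J.mkQ A) k := by
  letI := quotLeibniz J hJ
  induction k with
  | zero => rfl
  | succ k ih =>
    show Submodule.map J.mkQ (bk K g (subDerived K g A k) (subDerived K g A k)) = _
    rw [map_bk' J hJ, ih]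
    rfl

/-- Minimal condition on abelian ideals of `g ⧸ D`, restated for chains of ideals of `g`
containing `D` which are abelian modulo `D`. -/
lemma min_ab_g (D : Submodule K g) (hD : IsIdeal K g D)
    (hmin : @MinOnAbelianIdeals K (g ⧸ D) _ _ _ (quotLeibniz D hD))
    (I : ℕ → Submodule K g) (hid : ∀ n, IsIdeal K g (I n)) (hle : ∀ n, D ≤ I n)
    (hab : ∀ n, ∀ a ∈ I n, ∀ b ∈ I n, ⁅a, b⁆ ∈ D) (hdesc : ∀ n, I (n + 1) ≤ I n) :
    ∃ m, ∀ n, m ≤ n → I n = I m := by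
  letI := quotLeibniz D hD
  have hQab : ∀ n, IsAbelianIdeal K (g ⧸ D) (Submodule.map D.mkQ (I n)) := by
    intro n
    constructor
    · intro xb ab hab'
      obtain ⟨a, ha, rfl⟩ := hab'
      obtain ⟨x, rfl⟩ := Submodule.Quotient.mk_surjective D xb
      exact ⟨⟨⁅x, a⁆, (hid n x a ha).1, rfl⟩, ⟨⁅a, x⁆, (hid n x a ha).2, rfl⟩⟩
    · intro xb hx yb hy
      obtain ⟨a, ha, rfl⟩ := hx
      obtain ⟨b, hb, rfl⟩ := hy
      show Submodule.Quotient.mk ⁅a, b⁆ = (0 : g ⧸ D)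
      exact (Submodule.Quotient.mk_eq_zero D).2 (hab n a ha b hb)
  obtain ⟨m, hm⟩ := hmin (fun n => Submodule.map D.mkQ (I n)) hQab
    (fun n => Submodule.map_mono (hdesc n))
  have e : ∀ k, Submodule.comap D.mkQ (Submodule.map D.mkQ (I k)) = I k := fun k => by
    rw [Submodule.comap_map_mkQ, sup_eq_right.2 (hle k)]
  exact ⟨m, fun n hn => by rw [← e n, ← e m, hm n hn]⟩

end QuotTransfer

section MainInd

variable {K : Type u} {g : Type v} [Field K] [AddCommGroup g] [Module K g] [LeibnizAlgebra K g]

lemma main_ind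
    (Hab : ∀ (J : Submodule K g) (hJ : IsIdeal K g J),
        @MinOnAbelianIdeals K (g ⧸ J) _ _ _ (quotLeibniz J hJ)) :
    ∀ (d : ℕ) (J : Submodule K g), IsIdeal K g J →
      ∀ I : ℕ → Submodule K g, (∀ n, IsIdeal K g (I n)) → (∀ n, J ≤ I n) →
        (∀ n, subDerived K g (I n) d ≤ J) → (∀ n, I (n + 1) ≤ I n) →
        ∃ m, ∀ n, m ≤ n → I n = I m := by
  intro d
  induction d with
  | zero =>
    intro J hJ I hid hle hsol hdesc
    refine ⟨0, fun n _ => ?_⟩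
    have h1 : I n = J := le_antisymm (hsol n) (hle n)
    have h2 : I 0 = J := le_antisymm (hsol 0) (hle 0)
    rw [h1, h2]
  | succ d ih =>
    intro J hJ I hid hle hsol hdesc
    have hid' : ∀ n, IsIdeal K g (bk K g (I n) (I n) ⊔ J) :=
      fun n => sup_isIdeal' (bk_isIdeal' (hid n)) hJ
    have hsol' : ∀ n, subDerived K g (bk K g (I n) (I n) ⊔ J) d ≤ J := by
      intro n
      refine le_trans (subDerived_sup_le' hJ _ d) (sup_le ?_ le_rfl)
      rw [← subDerived_shift']
      exact hsol n
    obtain ⟨m₁, hm₁⟩ := ih J hJ (fun n => bk K g (I n) (I n) ⊔ J) hid'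
      (fun n => le_sup_right) hsol'
      (fun n => sup_le_sup_right (bk_mono' (hdesc n) (hdesc n)) J)
    have hDle : ∀ n, m₁ ≤ n → bk K g (I m₁) (I m₁) ⊔ J ≤ I n := by
      intro n hn
      rw [← hm₁ n hn]
      exact sup_le (bk_self_le (hid n)) (hle n)
    obtain ⟨m₂, hm₂⟩ := min_ab_g (bk K g (I m₁) (I m₁) ⊔ J) (hid' m₁)
      (Hab _ (hid' m₁)) (fun k => I (m₁ + k)) (fun k => hid _)
      (fun k => hDle _ (Nat.le_add_right _ _))
      (fun k a ha b hb => by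
        rw [← hm₁ (m₁ + k) (Nat.le_add_right _ _)]
        exact Submodule.mem_sup_left (mem_bk' ha hb))
      (fun k => hdesc _)
    refine ⟨m₁ + m₂, fun n hn => ?_⟩
    have h1 : m₂ ≤ n - m₁ := le_tsub_of_add_le_left hn
    have h2 := hm₂ (n - m₁) h1
    rwa [Nat.add_sub_cancel' (le_trans (Nat.le_add_right _ _) hn)] at h2

end MainInd

/-- For a Leibniz algebra `g`, every quotient of `g` satisfies the minimal condition on
solvable ideals iff every quotient of `g` satisfies the minimal condition on abelian
ideals. -/
theorem quotients_minOnSolvable_iff_minOnAbelian (K : Type u) (g : Type v) [Field K] [AddCommGroup g] [Module K g]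
    [LeibnizAlgebra K g] :
    (∀ (J : Submodule K g) (hJ : IsIdeal K g J),
        @MinOnSolvableIdeals K (g ⧸ J) _ _ _ (quotLeibniz J hJ)) ↔
    (∀ (J : Submodule K g) (hJ : IsIdeal K g J),
        @MinOnAbelianIdeals K (g ⧸ J) _ _ _ (quotLeibniz J hJ)) := by
  constructor
  · -- Min on solvable ⇒ Min on abelian: every abelian ideal is solvable.
    intro Hsol J hJ
    letI := quotLeibniz J hJ
    intro I hI hdesc
    refine Hsol J hJ I (fun n => ?_) hdesc
    refine ⟨(hI n).1, 1, ?_⟩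
    rw [eq_bot_iff]
    exact bk_le' fun a ha b hb => by
      rw [(hI n).2 a ha b hb]; exact Submodule.zero_mem ⊥
  · -- Min on abelian ⇒ Min on solvable.
    intro Hab J hJ
    letI := quotLeibniz J hJ
    intro Q hQ hdesc
    -- Pull the chain back to ideals of `g` containing `J`.
    set I : ℕ → Submodule K g := fun n => Submodule.comap J.mkQ (Q n) with hIdef
    have hid : ∀ n, IsIdeal K g (I n) := by
      intro n x a ha
      have h := (hQ n).1 (Submodule.Quotient.mk x) (Submodule.Quotient.mk a) ha
      exact ⟨h.1, h.2⟩
    have hle : ∀ n, J ≤ I n := by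
      intro n j hj
      show J.mkQ j ∈ Q n
      rw [Submodule.mkQ_apply, (Submodule.Quotient.mk_eq_zero J).2 hj]
      exact (Q n).zero_mem
    have hmapI : ∀ n, Submodule.map J.mkQ (I n) = Q n := by
      intro n
      rw [hIdef, Submodule.map_comap_eq, Submodule.range_mkQ, top_inf_eq]
    obtain ⟨d₀, hd₀⟩ := (hQ 0).2
    have hsol : ∀ n, subDerived K g (I n) d₀ ≤ J := by
      intro n x hx
      have hmem : J.mkQ x ∈ Submodule.map J.mkQ (subDerived K g (I n) d₀) :=
        ⟨x, hx, rfl⟩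
      rw [map_subDerived' J hJ, hmapI n] at hmem
      have hle2 : subDerived K (g ⧸ J) (Q n) d₀ ≤ subDerived K (g ⧸ J) (Q 0) d₀ :=
        subDerived_mono' (chain_le' Q hdesc (Nat.zero_le n)) d₀
      have : J.mkQ x ∈ (⊥ : Submodule K (g ⧸ J)) := hd₀ ▸ hle2 hmem
      rw [Submodule.mem_bot] at this
      exact (Submodule.Quotient.mk_eq_zero J).1 this
    obtain ⟨m, hm⟩ := main_ind Hab d₀ J hJ I hid hle hsol
      (fun n => Submodule.comap_mono (hdesc n))
    exact ⟨m, fun n hn => by rw [← hmapI n, ← hmapI m, hm n hn]⟩
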